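/- arXiv:2105.13650 — 2 statements merged into one kernel-verified Lean document; each statement's English description precedes it below -/
import Mathlib

section
/- Let L ≥ 0 and R > 0. If r is uniformly distributed on [0, R] and θ is uniformly distributed on [0, π], independently, then E[√(L² + r² − 2 L r cos θ)] ≤ (1/2)·L + (1/4)·L² + (R²/12 + R/4 + 1/4). -/
open intervalIntegral

theorem uniform_expectation_bound (L R : ℝ) (hL : 0 ≤ L) (hR : 0 < R) :
    ∫ r in (0:ℝ)..R, ∫ θ in (0:ℝ)..Real.pi,
        (1 / R) * (1 / Real.pi) * Real.sqrt (L ^ 2 + r ^ 2 - 2 * L * r * Real.cos θ)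
      ≤ (1 / 2) * L + (1 / 4) * L ^ 2 + (R ^ 2 / 12 + R / 4 + 1 / 4) := by
  have hπ := Real.pi_pos
  have hcont : Continuous (Function.uncurry fun r θ =>
      (1 / R) * (1 / Real.pi) * Real.sqrt (L ^ 2 + r ^ 2 - 2 * L * r * Real.cos θ)) := by
    have : Continuous (fun p : ℝ × ℝ =>
        (1 / R) * (1 / Real.pi) * Real.sqrt (L ^ 2 + p.1 ^ 2 - 2 * L * p.1 * Real.cos p.2)) := by
      apply Continuous.mul continuous_const
      apply Real.continuous_sqrt.comp
      fun_prop
    exact this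
  -- value of the inner integral of the majorant
  have inner_val : ∀ r : ℝ,
      (∫ θ in (0:ℝ)..Real.pi,
        (1 / R) * (1 / Real.pi) * ((L ^ 2 + r ^ 2 - 2 * L * r * Real.cos θ + 2 * L + 2 * r + 1) / 4))
      = (1 / R) * ((L ^ 2 + r ^ 2 + 2 * L + 2 * r + 1) / 4) := by
    intro r
    have heq : (fun θ => (1 / R) * (1 / Real.pi) *
        ((L ^ 2 + r ^ 2 - 2 * L * r * Real.cos θ + 2 * L + 2 * r + 1) / 4))
        = fun θ => (1 / R) * (1 / Real.pi) * ((L ^ 2 + r ^ 2 + 2 * L + 2 * r + 1) / 4)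
            - ((1 / R) * (1 / Real.pi) * (2 * L * r) / 4) * Real.cos θ := by
      funext θ; ring
    rw [heq, intervalIntegral.integral_sub intervalIntegrable_const
        ((show Continuous fun θ : ℝ =>
          ((1 / R) * (1 / Real.pi) * (2 * L * r) / 4) * Real.cos θ from
          continuous_const.mul Real.continuous_cos).intervalIntegrable _ _),
      intervalIntegral.integral_const, intervalIntegral.integral_const_mul,
      integral_cos]
    simp [Real.sin_pi]
    field_simp
  -- inner bound
  have key : ∀ r ∈ Set.Icc (0:ℝ) R,
      (∫ θ in (0:ℝ)..Real.pi,
          (1 / R) * (1 / Real.pi) * Real.sqrt (L ^ 2 + r ^ 2 - 2 * L * r * Real.cos θ))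
        ≤ (1 / R) * ((L ^ 2 + r ^ 2 + 2 * L + 2 * r + 1) / 4) := by
    intro r hr
    have hr0 : 0 ≤ r := hr.1
    rw [← inner_val r]
    apply intervalIntegral.integral_mono_on (le_of_lt hπ)
    · exact (Continuous.intervalIntegrable (by
        apply Continuous.mul continuous_const
        apply Real.continuous_sqrt.comp
        fun_prop) _ _)
    · exact (Continuous.intervalIntegrable (by fun_prop) _ _)
    · intro θ _
      have hc1 : Real.cos θ ≤ 1 := Real.cos_le_one θ
      have hc2 : -1 ≤ Real.cos θ := Real.neg_one_le_cos θ
      set X := L ^ 2 + r ^ 2 - 2 * L * r * Real.cos θ with hX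
      have hmm : 0 ≤ L * r * (1 - Real.cos θ) := by
        apply mul_nonneg (mul_nonneg hL hr0); linarith
      have hpp : 0 ≤ L * r * (1 + Real.cos θ) := by
        apply mul_nonneg (mul_nonneg hL hr0); linarith
      have hX0 : 0 ≤ X := by nlinarith [sq_nonneg (L - r)]
      have hs := Real.sq_sqrt hX0
      have hsn := Real.sqrt_nonneg X
      have hub : Real.sqrt X ≤ L + r := by
        rw [show L + r = Real.sqrt ((L + r) ^ 2) from (Real.sqrt_sq (by linarith)).symm]
        exact Real.sqrt_le_sqrt (by nlinarith [sq_nonneg (L + r)])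
      have hkey : Real.sqrt X ≤ (X + 2 * L + 2 * r + 1) / 4 := by
        nlinarith [sq_nonneg (Real.sqrt X - 1)]
      have hpos : 0 ≤ (1 / R) * (1 / Real.pi) := by positivity
      calc (1 / R) * (1 / Real.pi) * Real.sqrt X
          ≤ (1 / R) * (1 / Real.pi) * ((X + 2 * L + 2 * r + 1) / 4) := by
            exact mul_le_mul_of_nonneg_left hkey hpos
        _ = (1 / R) * (1 / Real.pi) * ((X + 2 * L + 2 * r + 1) / 4) := rfl
  -- outer bound
  have outer : (∫ r in (0:ℝ)..R, ∫ θ in (0:ℝ)..Real.pi,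
        (1 / R) * (1 / Real.pi) * Real.sqrt (L ^ 2 + r ^ 2 - 2 * L * r * Real.cos θ))
      ≤ ∫ r in (0:ℝ)..R, (1 / R) * ((L ^ 2 + r ^ 2 + 2 * L + 2 * r + 1) / 4) := by
    apply intervalIntegral.integral_mono_on (le_of_lt hR)
    · exact ((intervalIntegral.continuous_parametric_intervalIntegral_of_continuous'
        hcont 0 Real.pi).intervalIntegrable _ _)
    · exact (Continuous.intervalIntegrable (by fun_prop) _ _)
    · exact key
  refine outer.trans ?_
  have heq2 : (fun r : ℝ => (1 / R) * ((L ^ 2 + r ^ 2 + 2 * L + 2 * r + 1) / 4))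
      = fun r : ℝ => (1 / R) * ((L ^ 2 + 2 * L + 1) / 4) + ((1 / (2 * R)) * r + (1 / (4 * R)) * r ^ 2) := by
    funext r; field_simp; ring
  rw [heq2, intervalIntegral.integral_add intervalIntegrable_const
      (Continuous.intervalIntegrable (by fun_prop) _ _),
    intervalIntegral.integral_const,
    intervalIntegral.integral_add (Continuous.intervalIntegrable (by fun_prop) _ _)
      (Continuous.intervalIntegrable (by fun_prop) _ _),
    intervalIntegral.integral_const_mul, intervalIntegral.integral_const_mul,
    integral_id, integral_pow]
  simp only [smul_eq_mul, sub_zero]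
  apply le_of_eq
  field_simp
  ring
end

section
/- For all L ≥ 0 and r ≥ 0: (1/π)·∫₀^π √(L² + r² − 2Lr cos θ) dθ ≤ (1/2)·(√(L² + r²) + L + r). -/
theorem angle_average_bound (L r : ℝ) (hL : 0 ≤ L) (hr : 0 ≤ r) :
    (1 / Real.pi) * ∫ θ in (0:ℝ)..Real.pi,
        Real.sqrt (L ^ 2 + r ^ 2 - 2 * L * r * Real.cos θ)
      ≤ (1 / 2) * (Real.sqrt (L ^ 2 + r ^ 2) + L + r) := by
  have hpi : (0:ℝ) < Real.pi := Real.pi_pos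
  have hc : (0:ℝ) ≤ L ^ 2 + r ^ 2 := by positivity
  rcases eq_or_lt_of_le hc with h | h
  · have hL0 : L = 0 := by nlinarith [sq_nonneg L, sq_nonneg r]
    have hr0 : r = 0 := by nlinarith [sq_nonneg L, sq_nonneg r]
    subst hL0; subst hr0
    simp
  · set s := Real.sqrt (L ^ 2 + r ^ 2) with hs
    have hspos : 0 < s := Real.sqrt_pos.2 h
    have hs2 : s ^ 2 = L ^ 2 + r ^ 2 := Real.sq_sqrt hc
    set k := L * r / s with hk
    have hk0 : 0 ≤ k := by positivity
    have hsk : s * k = L * r := by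
      rw [hk, mul_div_assoc', mul_div_cancel_left₀ _ hspos.ne']
    have hks : k ≤ s / 2 := by
      rw [hk, div_le_div_iff₀ hspos (by norm_num : (0:ℝ) < 2)]
      nlinarith [sq_nonneg (L - r)]
    -- pointwise bound
    have hpt : ∀ θ ∈ Set.Icc (0:ℝ) Real.pi,
        Real.sqrt (L ^ 2 + r ^ 2 - 2 * L * r * Real.cos θ) ≤ s - k * Real.cos θ := by
      intro θ _
      have hcos : |Real.cos θ| ≤ 1 := Real.abs_cos_le_one θ
      have hc1 : Real.cos θ ≤ 1 := (abs_le.1 hcos).2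
      have hcm1 : -1 ≤ Real.cos θ := (abs_le.1 hcos).1
      have hrhs : 0 ≤ s - k * Real.cos θ := by nlinarith
      have hsq : L ^ 2 + r ^ 2 - 2 * L * r * Real.cos θ ≤ (s - k * Real.cos θ) ^ 2 := by
        nlinarith [sq_nonneg (k * Real.cos θ)]
      calc Real.sqrt (L ^ 2 + r ^ 2 - 2 * L * r * Real.cos θ)
          ≤ Real.sqrt ((s - k * Real.cos θ) ^ 2) := Real.sqrt_le_sqrt hsq
        _ = s - k * Real.cos θ := Real.sqrt_sq hrhs
    have hcont : Continuous fun θ : ℝ =>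
        Real.sqrt (L ^ 2 + r ^ 2 - 2 * L * r * Real.cos θ) := by
      fun_prop
    have hint1 : IntervalIntegrable (fun θ : ℝ =>
        Real.sqrt (L ^ 2 + r ^ 2 - 2 * L * r * Real.cos θ)) MeasureTheory.volume 0 Real.pi :=
      hcont.intervalIntegrable 0 Real.pi
    have hint2 : IntervalIntegrable (fun θ : ℝ => s - k * Real.cos θ)
        MeasureTheory.volume 0 Real.pi := by
      apply Continuous.intervalIntegrable; fun_prop
    have hmono := intervalIntegral.integral_mono_on hpi.le hint1 hint2 hpt
    have hval : (∫ θ in (0:ℝ)..Real.pi, (s - k * Real.cos θ)) = Real.pi * s := by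
      rw [intervalIntegral.integral_sub (by apply Continuous.intervalIntegrable; fun_prop)
          (by apply Continuous.intervalIntegrable; fun_prop)]
      simp [intervalIntegral.integral_const_mul, Real.sin_pi, mul_comm]
    have hI : (∫ θ in (0:ℝ)..Real.pi,
        Real.sqrt (L ^ 2 + r ^ 2 - 2 * L * r * Real.cos θ)) ≤ Real.pi * s := by
      rw [← hval]; exact hmono
    have hsLr : s ≤ L + r := by
      rw [hs, show L ^ 2 + r ^ 2 = (L + r) ^ 2 - 2 * L * r by ring]
      calc Real.sqrt ((L + r) ^ 2 - 2 * L * r) ≤ Real.sqrt ((L + r) ^ 2) :=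
            Real.sqrt_le_sqrt (by nlinarith)
        _ = L + r := Real.sqrt_sq (by linarith)
    have h1 : (1 / Real.pi) * ∫ θ in (0:ℝ)..Real.pi,
        Real.sqrt (L ^ 2 + r ^ 2 - 2 * L * r * Real.cos θ) ≤ s := by
      rw [div_mul_eq_mul_div, one_mul, div_le_iff₀ hpi]
      linarith [hI]
    linarith
end
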